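/- For a rooted tree with N ≥ 2 leaves in which every internal node has at least 2 children, the sum of the depths of all leaves is at most (N+2)(N−1)/2. -/
import Mathlib


/-- Ordered rooted trees: a node with a (possibly empty) ordered list of children. -/
inductive RTree where
  | node : List RTree → RTree

mutual
  /-- The list of depths of all leaves of the tree (in left-to-right order). -/
  def RTree.leafDepths : RTree → List ℕ
    | .node [] => [0]
    | .node (c :: cs) => RTree.leafDepthsAux (c :: cs)
  /-- Leaf depths of a forest, viewed as the children of a common root. -/
  def RTree.leafDepthsAux : List RTree → List ℕ
    | [] => []
    | t :: ts => (RTree.leafDepths t).map (· + 1) ++ RTree.leafDepthsAux ts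
end

/-- Number of leaves. -/
def RTree.numLeaves (t : RTree) : ℕ := t.leafDepths.length

/-- Height: the maximum leaf depth. -/
def RTree.height (t : RTree) : ℕ := t.leafDepths.foldr max 0

/-- Sum depth: total of all leaf depths. -/
def RTree.sumDepth (t : RTree) : ℕ := t.leafDepths.sum

mutual
  /-- Energies of all leaves over the M-ASK alphabet: the `j`-th edge (0-based)
  from any node carries symbol `2j+1` of energy `(2j+1)²`, and a leaf's energy is
  the sum of squared symbols along its root-to-leaf path. -/
  def RTree.leafEnergies : RTree → List ℕ
    | .node [] => [0]
    | .node (c :: cs) => RTree.leafEnergiesAux 0 (c :: cs)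
  def RTree.leafEnergiesAux : ℕ → List RTree → List ℕ
    | _, [] => []
    | j, t :: ts => (RTree.leafEnergies t).map (· + (2 * j + 1) ^ 2)
        ++ RTree.leafEnergiesAux (j + 1) ts
end

/-- Sum energy: total of all leaf energies. -/
def RTree.sumEnergy (t : RTree) : ℕ := t.leafEnergies.sum

/-- Every node has at most `M` children. -/
inductive RTree.MaxDeg (M : ℕ) : RTree → Prop
  | node (cs : List RTree) (hlen : cs.length ≤ M)
      (hc : ∀ t ∈ cs, RTree.MaxDeg M t) : RTree.MaxDeg M (.node cs)

/-- A `2⁺`-tree: every internal (non-leaf) node has at least two children. -/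
inductive RTree.MinDeg2 : RTree → Prop
  | node (cs : List RTree) (hlen : cs.length ≠ 1)
      (hc : ∀ t ∈ cs, RTree.MinDeg2 t) : RTree.MinDeg2 (.node cs)

/-- Full binary trees: every internal node has exactly two ordered children. -/
inductive RTree.FullBin : RTree → Prop
  | leaf : RTree.FullBin (.node [])
  | node (a b : RTree) : RTree.FullBin a → RTree.FullBin b →
      RTree.FullBin (.node [a, b])

lemma sum_map_add_one (l : List ℕ) : (l.map (· + 1)).sum = l.sum + l.length := by
  induction l with
  | nil => simp
  | cons a l ih => simp [ih]; omega

theorem RTree.numLeaves_pos : ∀ t : RTree, 1 ≤ t.numLeaves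
  | .node [] => by simp [RTree.numLeaves, RTree.leafDepths]
  | .node (c :: cs) => by
      have h := RTree.numLeaves_pos c
      simp only [RTree.numLeaves, RTree.leafDepths, RTree.leafDepthsAux,
        List.length_append, List.length_map] at *
      omega

mutual
theorem tree_bound : ∀ t : RTree, t.MinDeg2 →
    2 * t.sumDepth + 2 ≤ t.numLeaves * t.numLeaves + t.numLeaves
  | .node [], _ => by simp [RTree.sumDepth, RTree.numLeaves, RTree.leafDepths]
  | .node (c :: cs), h => by
      have hc : ∀ t ∈ c :: cs, t.MinDeg2 := by
        cases h with | node _ _ hc => exact hc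
      have hlen : 2 ≤ (c :: cs).length := by
        cases h with | node _ hlen _ => simp only [List.length_cons] at *; omega
      have := forest_bound (c :: cs) hlen hc
      simpa [RTree.sumDepth, RTree.numLeaves, RTree.leafDepths] using this

theorem forest_bound : ∀ ts : List RTree, 2 ≤ ts.length →
    (∀ t ∈ ts, t.MinDeg2) →
    2 * (RTree.leafDepthsAux ts).sum + 2 ≤
      (RTree.leafDepthsAux ts).length * (RTree.leafDepthsAux ts).length +
      (RTree.leafDepthsAux ts).length
  | [a, b], _, hmem => by
      have ha := tree_bound a (hmem a (by simp))
      have hb := tree_bound b (hmem b (by simp))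
      have hna := RTree.numLeaves_pos a
      have hnb := RTree.numLeaves_pos b
      simp only [RTree.leafDepthsAux, List.append_nil, List.sum_append,
        List.length_append, List.length_map, sum_map_add_one] at *
      simp only [RTree.sumDepth, RTree.numLeaves] at *
      nlinarith [ha, hb, hna, hnb]
  | a :: b :: c :: ts, _, hmem => by
      have ha := tree_bound a (hmem a (by simp))
      have hrest := forest_bound (b :: c :: ts) (by simp) (by
        intro t ht; exact hmem t (by simp [ht]))
      have hna := RTree.numLeaves_pos a
      have hm : 1 ≤ (RTree.leafDepthsAux (b :: c :: ts)).length := by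
        have := RTree.numLeaves_pos b
        simp only [RTree.leafDepthsAux, List.length_append, List.length_map] at *
        simp only [RTree.numLeaves] at this
        omega
      show 2 * (RTree.leafDepthsAux (a :: b :: c :: ts)).sum + 2 ≤ _
      simp only [RTree.leafDepthsAux, List.sum_append, List.length_append,
        List.length_map, sum_map_add_one] at *
      simp only [RTree.sumDepth, RTree.numLeaves] at *
      nlinarith [ha, hrest, hna, hm]
end

/-- For a rooted tree with `N ≥ 2` leaves in which every internal node
has at least 2 children, the sum of the leaf depths is at most `(N+2)(N−1)/2`. -/
theorem sumDepth_le_of_minDeg2 (t : RTree) (ht : RTree.MinDeg2 t)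
    (N : ℕ) (hN : 2 ≤ N) (hleaves : t.numLeaves = N) :
    t.sumDepth ≤ (N + 2) * (N - 1) / 2 := by
  have h := tree_bound t ht
  rw [hleaves] at h
  obtain ⟨k, rfl⟩ : ∃ k, N = k + 2 := ⟨N - 2, by omega⟩
  have h1 : (k + 2 + 2) * (k + 2 - 1) = k * k + 5 * k + 4 := by
    have e : k + 2 - 1 = k + 1 := rfl
    rw [e]; ring
  have h2 : (k + 2) * (k + 2) = k * k + 4 * k + 4 := by ring
  rw [h1]
  rw [h2] at h
  set q := k * k
  omega
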